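/- arXiv:0903.0063 — 5 statements merged into one kernel-verified Lean document; each statement's English description precedes it below -/
import Mathlib

section
/- For an infinite cardinal κ, d(κ) = max(d, cf([κ]^{≤ω})), where d = d(ω) is the dominating number (least number of compact sets covering ω^ω) and cf([κ]^{≤ω}) is the least cardinality of a cofinal family of countable subsets of κ. -/
open Cardinal Set Function

/-!
Every compact subset of `κ^ω` has finite projections, so the union of its projections is a
countable subset of `κ`; applied to a cover of size `d(κ)` this yields a cofinal family of
countable sets of size at most `d(κ)`. Restricting a cover of `κ^ω` to `ω^ω ⊆ κ^ω` gives
`d ≤ d(κ)`. Conversely, each countable `s` is the range of some `f : ω → κ`, so composing with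
`f` carries a cover of `ω^ω` by `d` compact sets onto a cover of `s^ω`; running over a cofinal
family gives `d(κ) ≤ cf([κ]^{≤ω}) · d`, and `d` is infinite.
-/

/-- `d(c)`: the least number of compact subsets covering `c^ω`, the countable power of a
discrete space of cardinality `c`. -/
noncomputable def dCard (c : Cardinal) : Cardinal :=
  letI : TopologicalSpace c.out := ⊥
  sInf {l | ∃ S : Set (Set (ℕ → c.out)), #↥S = l ∧ (∀ t ∈ S, IsCompact t) ∧ ⋃₀ S = Set.univ}

/-- `cf([c]^{≤ω})`: the least cardinality of a family of countable subsets of a set of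
cardinality `c` such that every countable subset is contained in a member of the family. -/
noncomputable def cfCard (c : Cardinal) : Cardinal :=
  sInf {l | ∃ F : Set (Set c.out), #↥F = l ∧ (∀ a ∈ F, a.Countable) ∧
    ∀ s : Set c.out, s.Countable → ∃ a ∈ F, s ⊆ a}

universe u

section Numbers

variable (α : Type u)

noncomputable def compactCoverNumber [TopologicalSpace α] : Cardinal :=
  sInf {l | ∃ S : Set (Set (ℕ → α)), #S = l ∧ (∀ t ∈ S, IsCompact t) ∧ ⋃₀ S = Set.univ}

noncomputable def countableSetsCofinality : Cardinal :=
  sInf {l | ∃ F : Set (Set α), #F = l ∧ (∀ a ∈ F, a.Countable) ∧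
    ∀ s : Set α, s.Countable → ∃ a ∈ F, s ⊆ a}

variable {α}

theorem compactCoverNumber_le [TopologicalSpace α] {S : Set (Set (ℕ → α))}
    (hS : ∀ t ∈ S, IsCompact t) (hcover : ⋃₀ S = Set.univ) : compactCoverNumber α ≤ #S :=
  csInf_le' ⟨S, rfl, hS, hcover⟩

theorem exists_compactCover [TopologicalSpace α] : ∃ S : Set (Set (ℕ → α)),
    #S = compactCoverNumber α ∧ (∀ t ∈ S, IsCompact t) ∧ ⋃₀ S = Set.univ :=
  csInf_mem (s := {l | ∃ S : Set (Set (ℕ → α)), #S = l ∧ (∀ t ∈ S, IsCompact t) ∧ ⋃₀ S = Set.univ})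
    ⟨_, range ({·}), rfl, forall_mem_range.2 fun _ => isCompact_singleton,
      by rw [sUnion_range, iUnion_of_singleton]⟩

theorem countableSetsCofinality_le {F : Set (Set α)} (hF : ∀ a ∈ F, a.Countable)
    (hcofinal : ∀ s : Set α, s.Countable → ∃ a ∈ F, s ⊆ a) : countableSetsCofinality α ≤ #F :=
  csInf_le' ⟨F, rfl, hF, hcofinal⟩

theorem exists_countable_cofinal : ∃ F : Set (Set α), #F = countableSetsCofinality α ∧
    (∀ a ∈ F, a.Countable) ∧ ∀ s : Set α, s.Countable → ∃ a ∈ F, s ⊆ a :=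
  csInf_mem (s := {l | ∃ F : Set (Set α), #F = l ∧ (∀ a ∈ F, a.Countable) ∧
      ∀ s : Set α, s.Countable → ∃ a ∈ F, s ⊆ a})
    ⟨_, {a | a.Countable}, rfl, fun _ ha => ha, fun s hs => ⟨s, hs, subset_rfl⟩⟩

theorem dCard_eq_compactCoverNumber (c : Cardinal.{u}) :
    dCard c = @compactCoverNumber c.out ⊥ :=
  rfl

theorem cfCard_eq_countableSetsCofinality (c : Cardinal.{u}) :
    cfCard c = countableSetsCofinality c.out :=
  rfl

end Numbers

section ComposeLeft

variable {α β : Type u} [TopologicalSpace β] [DiscreteTopology β]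

theorem continuous_comp_left [TopologicalSpace α] (f : β → α) :
    Continuous fun g : ℕ → β => f ∘ g :=
  continuous_pi fun n => continuous_of_discreteTopology.comp (continuous_apply n)

theorem compactCoverNumber_le_mul [TopologicalSpace α] [Nonempty α] (e : β ≃ ℕ) :
    compactCoverNumber α ≤ countableSetsCofinality α * compactCoverNumber β := by
  obtain ⟨T, hT_card, hT_compact, hT_cover⟩ := exists_compactCover (α := β)
  obtain ⟨F, hF_card, hF_countable, hF_cofinal⟩ := exists_countable_cofinal (α := α)
  have hparam : ∀ a ∈ F, ∃ f : β → α, a ⊆ range f := fun a ha => by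
    obtain ⟨f, hf⟩ := countable_iff_exists_subset_range.mp (hF_countable a ha)
    exact ⟨f ∘ e, by rwa [e.surjective.range_comp]⟩
  choose! f hf using hparam
  let Φ : Set α × Set (ℕ → β) → Set (ℕ → α) := fun p => (f p.1 ∘ ·) '' p.2
  calc compactCoverNumber α ≤ #(Φ '' F ×ˢ T) := by
        refine compactCoverNumber_le (forall_mem_image.2 fun p hp => ?_) ?_
        · exact (hT_compact p.2 hp.2).image (continuous_comp_left _)
        refine eq_univ_of_forall fun g => ?_
        obtain ⟨a, ha, hga⟩ := hF_cofinal _ (countable_range g)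
        obtain ⟨h, rfl⟩ := range_subset_range_iff_exists_comp.mp (hga.trans (hf a ha))
        obtain ⟨K, hK, hhK⟩ := hT_cover.symm ▸ Set.mem_univ h
        exact ⟨Φ (a, K), mem_image_of_mem _ ⟨ha, hK⟩, h, hhK, rfl⟩
    _ ≤ #(F ×ˢ T) := mk_image_le
    _ = countableSetsCofinality α * compactCoverNumber β := by rw [mk_setProd, hF_card, hT_card]

end ComposeLeft

section Discrete

variable {α β : Type u} [TopologicalSpace α] [DiscreteTopology α]
  [TopologicalSpace β] [DiscreteTopology β]

theorem IsCompact.finite_image_eval {K : Set (ℕ → α)} (hK : IsCompact K) (n : ℕ) :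
    ((· n) '' K).Finite :=
  isCompact_iff_finite.mp (hK.image (continuous_apply n))

theorem IsCompact.countable_iUnion_image_eval {K : Set (ℕ → α)} (hK : IsCompact K) :
    (⋃ n, (· n) '' K).Countable :=
  countable_iUnion fun n => (hK.finite_image_eval n).countable

theorem IsCompact.preimage_comp_left {f : β → α} (hf : Injective f) {K : Set (ℕ → α)}
    (hK : IsCompact K) : IsCompact ((f ∘ ·) ⁻¹' K) := by
  refine (isCompact_univ_pi fun n => ((hK.finite_image_eval n).preimage hf.injOn).isCompact)
    |>.of_isClosed_subset (hK.isClosed.preimage (continuous_comp_left f)) ?_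
  intro g hg n _
  exact ⟨f ∘ g, hg, rfl⟩

theorem aleph0_le_compactCoverNumber [Infinite α] : ℵ₀ ≤ compactCoverNumber α := by
  obtain ⟨S, hS_card, hS_compact, hS_cover⟩ := exists_compactCover (α := α)
  rw [← hS_card]
  by_contra! hS_finite
  have hcompact : IsCompact (Set.univ : Set (ℕ → α)) :=
    hS_cover ▸ (lt_aleph0_iff_set_finite.mp hS_finite).isCompact_sUnion hS_compact
  have : IsCompact (Set.univ : Set α) := by
    simpa only [image_univ, range_eval] using hcompact.image (continuous_apply 0)
  exact infinite_univ (isCompact_iff_finite.mp this)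

theorem compactCoverNumber_le_of_injective {f : β → α} (hf : Injective f) :
    compactCoverNumber β ≤ compactCoverNumber α := by
  obtain ⟨S, hS_card, hS_compact, hS_cover⟩ := exists_compactCover (α := α)
  calc compactCoverNumber β ≤ #((fun K => (f ∘ ·) ⁻¹' K) '' S) := by
        refine compactCoverNumber_le (forall_mem_image.2 fun K hK => ?_) ?_
        · exact (hS_compact K hK).preimage_comp_left hf
        · rw [sUnion_image, ← preimage_iUnion₂, ← sUnion_eq_biUnion, hS_cover, preimage_univ]
    _ ≤ #S := mk_image_le
    _ = compactCoverNumber α := hS_card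

theorem countableSetsCofinality_le_compactCoverNumber [Nonempty α] :
    countableSetsCofinality α ≤ compactCoverNumber α := by
  obtain ⟨S, hS_card, hS_compact, hS_cover⟩ := exists_compactCover (α := α)
  calc countableSetsCofinality α ≤ #((fun K => ⋃ n, (· n) '' K) '' S) := by
        refine countableSetsCofinality_le
          (forall_mem_image.2 fun K hK => (hS_compact K hK).countable_iUnion_image_eval) ?_
        intro s hs
        obtain ⟨g, hsg⟩ := countable_iff_exists_subset_range.mp hs
        obtain ⟨K, hK, hgK⟩ := hS_cover.symm ▸ Set.mem_univ g
        refine ⟨_, mem_image_of_mem _ hK, hsg.trans ?_⟩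
        rintro _ ⟨n, rfl⟩
        exact mem_iUnion.mpr ⟨n, g, hgK, rfl⟩
    _ ≤ #S := mk_image_le
    _ = compactCoverNumber α := hS_card

end Discrete

/-- For an infinite cardinal `κ`, `d(κ) = max(d, cf([κ]^{≤ω}))`, where `d = d(ω)` is the
dominating number. -/
theorem stmt7 (κ : Cardinal) (hκ : ℵ₀ ≤ κ) :
    dCard κ = max (dCard ℵ₀) (cfCard κ) := by
  let : TopologicalSpace κ.out := ⊥
  let : TopologicalSpace (ℵ₀ : Cardinal).out := ⊥
  have : DiscreteTopology κ.out := ⟨rfl⟩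
  have : DiscreteTopology (ℵ₀ : Cardinal).out := ⟨rfl⟩
  have : Nonempty κ.out := mk_ne_zero_iff.mp (by simpa using (aleph0_pos.trans_le hκ).ne')
  obtain ⟨_⟩ : Nonempty (Denumerable (ℵ₀ : Cardinal).out) := denumerable_iff.mpr (mk_out _)
  obtain ⟨ι⟩ : Nonempty ((ℵ₀ : Cardinal).out ↪ κ.out) := by
    rwa [← le_def, mk_out, mk_out]
  rw [dCard_eq_compactCoverNumber, dCard_eq_compactCoverNumber, cfCard_eq_countableSetsCofinality]
  refine le_antisymm ?_ (max_le (compactCoverNumber_le_of_injective ι.injective)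
    countableSetsCofinality_le_compactCoverNumber)
  calc compactCoverNumber κ.out
      ≤ countableSetsCofinality κ.out * compactCoverNumber (ℵ₀ : Cardinal).out :=
        compactCoverNumber_le_mul (Denumerable.eqv _)
    _ ≤ _ := mul_le_max_of_aleph0_le_right aleph0_le_compactCoverNumber
    _ = _ := max_comm _ _
end

section
/- If φ: Σ → 2^X is an usco from a topological space Σ onto X, and Σ is the union of λ compact subsets, then X is the union of λ compact subsets. In particular, for a Banach space X with its weak topology, CG(X) ≤ d(ℓK(X)). -/
open Cardinal Set

/-- An usco `φ : Σ → 2^X`: compact values, upper semicontinuous, with union all of `X`. -/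
def IsUsco {S X : Type*} [TopologicalSpace S] [TopologicalSpace X] (φ : S → Set X) : Prop :=
  (∀ σ, IsCompact (φ σ)) ∧ (∀ U : Set X, IsOpen U → IsOpen {σ | φ σ ⊆ U}) ∧
    (⋃ σ, φ σ) = Set.univ

/-- The weight of a topological space: the least cardinality of a basis. -/
noncomputable def tWeight (X : Type*) [TopologicalSpace X] : Cardinal :=
  sInf {c | ∃ B : Set (Set X), #↥B = c ∧ TopologicalSpace.IsTopologicalBasis B}

/-- The index of 𝒦-analyticity `ℓK(X)`. -/
noncomputable def ellK (X : Type) [TopologicalSpace X] : Cardinal :=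
  sInf {c | ℵ₀ ≤ c ∧ ∃ (M : Type) (_ : MetricSpace M), CompleteSpace M ∧ tWeight M = c ∧
    ∃ φ : M → Set X, IsUsco φ}

/-- The index of compact generation `CG(X)`: the least infinite cardinal `κ` such that
there is a family of `κ` many compact subsets of `X` whose union is dense. -/
noncomputable def CG (X : Type) [TopologicalSpace X] : Cardinal :=
  sInf {c | ℵ₀ ≤ c ∧ ∃ S : Set (Set X), #↥S ≤ c ∧ (∀ t ∈ S, IsCompact t) ∧ Dense (⋃₀ S)}

/-! The image of a compact set `K` under an usco `φ` is compact: each value `φ σ` lies in a finite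
union `V` of members of an open cover, the open sets `{σ | φ σ ⊆ V}` form a directed cover of `K`,
and compactness of `K` leaves a single one. So an usco carries a compact cover of its domain to a
compact cover of `X` with the same index set.

For the bound on `CG`, let `M` be a complete metric space of weight `κ = ℓK(X)` with an usco onto
`X`, and `u : κ → M` with dense range. The sequences `x : ℕ → κ` along which `u ∘ x` moves by at
most `2⁻ⁿ` at step `n` form a closed subset of `κ^ω` which `x ↦ lim u ∘ x` maps continuously onto
`M`; composed with a retraction of `κ^ω` onto that subset and then with the usco, this is an usco
from `κ^ω` onto `X`, which carries a cover of `κ^ω` by `d(κ)` compacta to one of `X`. -/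

open Filter Function Metric Topology TopologicalSpace

universe u

namespace IsUsco

variable {S X : Type*} [TopologicalSpace S] [TopologicalSpace X] {φ : S → Set X}

theorem isCompact_biUnion (hφ : IsUsco φ) {K : Set S} (hK : IsCompact K) :
    IsCompact (⋃ σ ∈ K, φ σ) := by
  refine isCompact_of_finite_subcover fun {ι} U hUo hcov => ?_
  let V : Finset ι → Set S := fun t => {σ | φ σ ⊆ ⋃ i ∈ t, U i}
  have hV_cover : K ⊆ ⋃ t, V t := fun σ hσ =>
    mem_iUnion.2 <| (hφ.1 σ).elim_finite_subcover U hUo fun x hx => hcov (mem_biUnion hσ hx)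
  have hV_mono : Monotone V := fun t t' htt' σ hσ => hσ.trans <| biUnion_subset_biUnion_left htt'
  obtain ⟨t, ht⟩ := hK.elim_directed_cover V (fun t => hφ.2.1 _ (isOpen_biUnion fun i _ => hUo i))
    hV_cover hV_mono.directed_le
  exact ⟨t, iUnion₂_subset fun σ hσ => ht hσ⟩

theorem exists_isCompact_iUnion_eq_univ (hφ : IsUsco φ) {ι : Type*} {K : ι → Set S}
    (hK : ∀ i, IsCompact (K i)) (hcov : ⋃ i, K i = Set.univ) :
    ∃ K' : ι → Set X, (∀ i, IsCompact (K' i)) ∧ ⋃ i, K' i = Set.univ := by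
  refine ⟨fun i => ⋃ σ ∈ K i, φ σ, fun i => hφ.isCompact_biUnion (hK i), ?_⟩
  rw [← biUnion_iUnion, hcov, biUnion_univ, hφ.2.2]

theorem comp {T : Type*} [TopologicalSpace T] (hφ : IsUsco φ) {f : T → S} (hf : Continuous f)
    (hf' : Surjective f) : IsUsco (φ ∘ f) :=
  ⟨fun τ => hφ.1 (f τ), fun U hU => (hφ.2.1 U hU).preimage hf, by
    rw [← hφ.2.2, ← hf'.iUnion_comp]; rfl⟩

end IsUsco

theorem isUsco_singleton {S X : Type*} [TopologicalSpace S] [TopologicalSpace X] {f : S → X}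
    (hf : Continuous f) (hf' : Surjective f) : IsUsco fun σ => {f σ} :=
  ⟨fun _ => isCompact_singleton,
    fun U hU => by simp only [singleton_subset_iff]; exact hU.preimage hf,
    by simpa only [iUnion_singleton_eq_range] using hf'.range_eq⟩

section GeometricCodes

variable {ι M : Type*} [MetricSpace M] (u : ι → M)

def geometricCodes : Set (ℕ → ι) :=
  {x | ∀ n, dist (u (x n)) (u (x (n + 1))) ≤ (1 / 2 : ℝ) ^ n}

noncomputable def decodeGeometric (x : geometricCodes u) : M :=
  haveI : Nonempty M := ⟨u (x.1 0)⟩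
  limUnder atTop (u ∘ (x : ℕ → ι))

variable {u}

theorem dist_le_of_mem_geometricCodes {x : ℕ → ι} (hx : x ∈ geometricCodes u) (n : ℕ) :
    dist ((u ∘ x) n) ((u ∘ x) (n + 1)) ≤ 1 * (1 / 2 : ℝ) ^ n :=
  by rw [one_mul]; exact hx n

theorem tendsto_decodeGeometric [CompleteSpace M] (x : geometricCodes u) :
    Tendsto (u ∘ (x : ℕ → ι)) atTop (𝓝 (decodeGeometric u x)) :=
  haveI : Nonempty M := ⟨u (x.1 0)⟩
  (cauchySeq_of_le_geometric _ _ (by norm_num) (dist_le_of_mem_geometricCodes x.2)).tendsto_limUnder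

theorem dist_decodeGeometric_le [CompleteSpace M] (x : geometricCodes u) (n : ℕ) :
    dist (u (x.1 n)) (decodeGeometric u x) ≤ 2 * (1 / 2 : ℝ) ^ n := by
  have h := dist_le_of_le_geometric_of_tendsto _ _ (by norm_num) (dist_le_of_mem_geometricCodes x.2)
    (tendsto_decodeGeometric x) n
  norm_num at h ⊢
  linarith

theorem dist_decodeGeometric_le_of_apply_eq [CompleteSpace M] {x y : geometricCodes u} {n : ℕ}
    (h : x.1 n = y.1 n) : dist (decodeGeometric u x) (decodeGeometric u y) ≤ 4 * (1 / 2 : ℝ) ^ n :=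
  calc dist (decodeGeometric u x) (decodeGeometric u y)
      ≤ dist (u (x.1 n)) (decodeGeometric u x) + dist (u (y.1 n)) (decodeGeometric u y) := by
        rw [h]; exact dist_triangle_left _ _ _
    _ ≤ 2 * (1 / 2) ^ n + 2 * (1 / 2) ^ n :=
        add_le_add (dist_decodeGeometric_le x n) (dist_decodeGeometric_le y n)
    _ = 4 * (1 / 2) ^ n := by ring

theorem surjective_decodeGeometric [CompleteSpace M] (hu : DenseRange u) :
    Surjective (decodeGeometric u) := by
  intro a
  choose x hx using fun n : ℕ => hu.exists_dist_lt a (pow_pos one_half_pos (n + 1))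
  have hx_code : x ∈ geometricCodes u := fun n =>
    calc dist (u (x n)) (u (x (n + 1))) ≤ dist a (u (x n)) + dist a (u (x (n + 1))) :=
          dist_triangle_left _ _ _
      _ ≤ (1 / 2) ^ (n + 1) + (1 / 2) ^ (n + 1 + 1) := add_le_add (hx n).le (hx (n + 1)).le
      _ ≤ (1 / 2) ^ n := by
          have : (0 : ℝ) < (1 / 2) ^ n := by positivity
          ring_nf; linarith
  have hx_lim : Tendsto (u ∘ x) atTop (𝓝 a) := by
    refine tendsto_iff_dist_tendsto_zero.2 (squeeze_zero (fun _ => dist_nonneg)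
      (fun n => (dist_comm _ _).trans_le (hx n).le) ?_)
    exact (tendsto_pow_atTop_nhds_zero_of_lt_one one_half_pos.le one_half_lt_one).comp
      (tendsto_add_atTop_nat 1)
  exact ⟨⟨x, hx_code⟩, tendsto_nhds_unique (tendsto_decodeGeometric ⟨x, hx_code⟩) hx_lim⟩

variable [TopologicalSpace ι] [DiscreteTopology ι]

theorem isClosed_geometricCodes : IsClosed (geometricCodes u) := by
  rw [geometricCodes, ofPred_forall]
  exact isClosed_iInter fun n => isClosed_le
    ((continuous_of_discreteTopology.comp (continuous_apply n)).dist
      (continuous_of_discreteTopology.comp (continuous_apply (n + 1)))) continuous_const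

theorem continuous_decodeGeometric [CompleteSpace M] : Continuous (decodeGeometric u) := by
  refine Metric.continuous_iff'.2 fun x ε hε => ?_
  obtain ⟨n, hn⟩ := exists_pow_lt_of_lt_one (div_pos hε four_pos) one_half_lt_one
  have h_cyl : ∀ᶠ y in 𝓝 x, (y : geometricCodes u).1 n ∈ ({x.1 n} : Set ι) :=
    ((continuous_apply n).comp continuous_subtype_val).continuousAt.eventually_mem
      ((isOpen_discrete _).mem_nhds (mem_singleton _))
  filter_upwards [h_cyl] with y hy
  calc dist (decodeGeometric u y) (decodeGeometric u x) ≤ 4 * (1 / 2) ^ n :=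
        dist_decodeGeometric_le_of_apply_eq hy
    _ < ε := by linarith

theorem exists_continuous_surjective_of_denseRange [CompleteSpace M] [Nonempty M]
    (hu : DenseRange u) :
    ∃ f : (ℕ → ι) → M, Continuous f ∧ Surjective f := by
  have h_surj := surjective_decodeGeometric hu
  obtain ⟨r, -, hr, hr_cont⟩ := PiNat.exists_retraction_subtype_of_isClosed
    isClosed_geometricCodes (nonempty_coe_sort.1 h_surj.nonempty)
  exact ⟨decodeGeometric u ∘ r, continuous_decodeGeometric.comp hr_cont, h_surj.comp hr⟩

end GeometricCodes

section Weight

variable {X : Type u} [TopologicalSpace X]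

variable (X) in
theorem tWeight_mem : tWeight X ∈ {c | ∃ B : Set (Set X), #B = c ∧ IsTopologicalBasis B} :=
  csInf_mem ⟨_, _, rfl, isTopologicalBasis_opens⟩

theorem aleph0_le_tWeight [T0Space X] [Infinite X] : ℵ₀ ≤ tWeight X := by
  refine le_csInf ⟨_, _, rfl, isTopologicalBasis_opens⟩ ?_
  rintro _ ⟨B, rfl, hB⟩
  have h_inj : Injective fun x : X => {s : B | x ∈ (s : Set X)} := fun x y hxy =>
    hB.eq_iff.2 fun s hs => Set.ext_iff.1 hxy ⟨s, hs⟩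
  have : Infinite (Set B) := Infinite.of_injective _ h_inj
  rw [aleph0_le_mk_iff, ← not_finite_iff_infinite]
  intro
  exact not_finite (Set B)

theorem exists_denseRange_of_tWeight_le [Nonempty X] {ι : Type u} (h : tWeight X ≤ #ι) :
    ∃ u : ι → X, DenseRange u := by
  obtain ⟨B, hB_card, hB⟩ := tWeight_mem X
  obtain ⟨e⟩ := Cardinal.le_def _ _ |>.1 (hB_card.trans_le h)
  let p : B → X := fun s => Classical.epsilon (· ∈ (s : Set X))
  have hp : Dense (range p) := hB.dense_iff.2 fun s hs hs_ne =>
    ⟨p ⟨s, hs⟩, Classical.epsilon_spec hs_ne, mem_range_self _⟩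
  have : Nonempty B := by
    obtain ⟨s, hs, -⟩ := hB.sUnion_eq.symm ▸ mem_univ (Classical.arbitrary X)
    exact ⟨⟨s, hs⟩⟩
  refine ⟨p ∘ invFun e, ?_⟩
  rwa [DenseRange, (invFun_surjective e.injective).range_comp]

end Weight

theorem IsUsco.nonempty {S X : Type*} [TopologicalSpace S] [TopologicalSpace X] [Nonempty X]
    {φ : S → Set X} (hφ : IsUsco φ) : Nonempty S := by
  obtain ⟨σ, -⟩ := mem_iUnion.1 (hφ.2.2 ▸ mem_univ (Classical.arbitrary X))
  exact ⟨σ⟩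

theorem ellK_mem {X M : Type} [TopologicalSpace X] [MetricSpace M] [CompleteSpace M] [Nonempty M]
    {φ : M → Set X} (hφ : IsUsco φ) :
    ellK X ∈ {c | ℵ₀ ≤ c ∧ ∃ (M : Type) (_ : MetricSpace M), CompleteSpace M ∧ tWeight M = c ∧
      ∃ φ : M → Set X, IsUsco φ} :=
  -- the factor `ℝ` makes the space infinite, hence of infinite weight as `ℓK` requires
  csInf_mem ⟨tWeight (M × ℝ), aleph0_le_tWeight, M × ℝ, inferInstance, inferInstance, rfl,
    φ ∘ Prod.fst, hφ.comp continuous_fst Prod.fst_surjective⟩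

theorem dCard_mem (κ : Cardinal) [TopologicalSpace κ.out] [DiscreteTopology κ.out] :
    dCard κ ∈ {l | ∃ C : Set (Set (ℕ → κ.out)), #C = l ∧ (∀ t ∈ C, IsCompact t) ∧
      ⋃₀ C = Set.univ} := by
  rw [dCard, ← DiscreteTopology.eq_bot (α := κ.out)]
  exact csInf_mem ⟨_, range singleton, rfl, forall_mem_range.2 fun _ => isCompact_singleton,
    (sUnion_range _).trans (iUnion_of_singleton _)⟩

theorem aleph0_le_dCard {κ : Cardinal} (hκ : ℵ₀ ≤ κ) : ℵ₀ ≤ dCard κ := by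
  let _ : TopologicalSpace κ.out := ⊥
  have : DiscreteTopology κ.out := ⟨rfl⟩
  have : Infinite κ.out := Cardinal.infinite_iff.2 (by rwa [mk_out])
  obtain ⟨C, hC_card, hC, hC_cov⟩ := dCard_mem κ
  by_contra! h_fin
  have h_univ : IsCompact (Set.univ : Set (ℕ → κ.out)) :=
    hC_cov ▸ (lt_aleph0_iff_set_finite.1 (hC_card ▸ h_fin)).isCompact_sUnion hC
  have := (h_univ.image (continuous_apply 0)).finite_of_discrete
  rw [image_univ, (surjective_eval 0).range_eq] at this
  exact infinite_univ this

theorem CG_le_of_isCompact_of_dense {X : Type} [TopologicalSpace X] {C : Set (Set X)}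
    {c : Cardinal} (hc : ℵ₀ ≤ c) (hC_card : #C ≤ c) (hC : ∀ t ∈ C, IsCompact t)
    (hC_dense : Dense (⋃₀ C)) : CG X ≤ c :=
  csInf_le' ⟨hc, C, hC_card, hC, hC_dense⟩

theorem IsUsco.exists_isCompact_sUnion_eq_univ_card_le_dCard {M X : Type u} [MetricSpace M]
    [CompleteSpace M] [Nonempty M] [TopologicalSpace X] {φ : M → Set X} (hφ : IsUsco φ) :
    ∃ C : Set (Set X), #C ≤ dCard (tWeight M) ∧ (∀ t ∈ C, IsCompact t) ∧ ⋃₀ C = Set.univ := by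
  let _ : TopologicalSpace (tWeight M).out := ⊥
  have : DiscreteTopology (tWeight M).out := ⟨rfl⟩
  obtain ⟨u, hu⟩ := exists_denseRange_of_tWeight_le (mk_out (tWeight M)).ge
  obtain ⟨f, hf, hf'⟩ := exists_continuous_surjective_of_denseRange hu
  obtain ⟨C, hC_card, hC, hC_cov⟩ := dCard_mem (tWeight M)
  obtain ⟨K, hK, hK_cov⟩ := (hφ.comp hf hf').exists_isCompact_iUnion_eq_univ
    (K := ((↑) : C → Set _)) (fun t => hC t t.2) (by rwa [← sUnion_eq_iUnion])
  exact ⟨range K, mk_range_le.trans hC_card.le, forall_mem_range.2 hK, by rwa [sUnion_range]⟩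

theorem CG_le_dCard_ellK {X M : Type} [TopologicalSpace X] [Nonempty X] [MetricSpace M]
    [CompleteSpace M] {φ : M → Set X} (hφ : IsUsco φ) : CG X ≤ dCard (ellK X) := by
  have := hφ.nonempty
  obtain ⟨hκ, M', _, _, hM', φ', hφ'⟩ := ellK_mem hφ
  have := hφ'.nonempty
  obtain ⟨C, hC_card, hC, hC_cov⟩ := hφ'.exists_isCompact_sUnion_eq_univ_card_le_dCard
  rw [hM'] at hC_card
  exact CG_le_of_isCompact_of_dense (aleph0_le_dCard hκ) hC_card hC (hC_cov ▸ dense_univ)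

/-- If `φ : Σ → 2^X` is an usco and `Σ` is the union of a family of compact sets, then `X`
is the union of a family of compact sets over the same index; in particular, for a Banach
space `X` with its weak topology, `CG(X) ≤ d(ℓK(X))`. -/
theorem stmt10 :
    (∀ (S X : Type) (_ : TopologicalSpace S) (_ : TopologicalSpace X) (φ : S → Set X),
      IsUsco φ → ∀ (ι : Type) (K : ι → Set S), (∀ i, IsCompact (K i)) →
        (⋃ i, K i) = Set.univ →
        ∃ K' : ι → Set X, (∀ i, IsCompact (K' i)) ∧ (⋃ i, K' i) = Set.univ) ∧
    (∀ (X : Type) (_ : NormedAddCommGroup X), ∀ _ : NormedSpace ℝ X, CompleteSpace X →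
      CG (WeakSpace ℝ X) ≤ dCard (ellK (WeakSpace ℝ X))) :=
  ⟨fun _ _ _ _ _ hφ _ _ hK hK_cov => hφ.exists_isCompact_iUnion_eq_univ hK hK_cov,
    fun X _ _ _ => CG_le_dCard_ellK (isUsco_singleton (toWeakSpaceCLM ℝ X).continuous
      toWeakSpaceCLM_bijective.surjective)⟩
end

section
/- Let Z be a metric space with a well-order <, and let 𝒜 be the family of all subsets A of Z such that every finite subset of A has the form {ξ_1 < ... < ξ_n} with d(ξ_i, ξ_j) ≤ 1/i for all i < j. Then every member of 𝒜 is at most countable; indeed the order type of any A ∈ 𝒜 in the well-order is at most ω + 1. -/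
/-!
If `x < y` in `A` and `A` has `n` elements below `x`, the chain formed by them, `x` and `y`
gives `dist x y ≤ 1 / (n + 1)`. So an element of `A` with infinitely many predecessors in `A`
is the greatest element of `A`; every other element is determined by its finite number of
predecessors in `A`, hence `A` is countable and has no two elements above an `ω`-chain.
-/

open Set

theorem Fin.strictMono_snoc {α : Type*} [Preorder α] {n : ℕ} {g : Fin n → α} {x : α}
    (hg : StrictMono g) (hx : ∀ i, g i < x) : StrictMono (Fin.snoc g x : Fin (n + 1) → α) := by
  intro i j hij
  obtain ⟨i, rfl⟩ := Fin.exists_castSucc_eq.2 (Fin.ne_last_of_lt hij)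
  rcases eq_or_ne j (Fin.last n) with rfl | hj
  · simpa only [Fin.snoc_castSucc, Fin.snoc_last] using hx i
  · obtain ⟨j, rfl⟩ := Fin.exists_castSucc_eq.2 hj
    simpa only [Fin.snoc_castSucc] using hg (Fin.castSucc_lt_castSucc_iff.1 hij)

-- Chains are indexed from `0`, so the paper's bound `1 / i` reads `1 / (i + 1)` here.
def IsAdmissible {Z : Type*} [Dist Z] [LinearOrder Z] (A : Set Z) : Prop :=
  ∀ (n : ℕ) (ξ : Fin n → Z), StrictMono ξ → (∀ i, ξ i ∈ A) →
    ∀ i j : Fin n, i < j → dist (ξ i) (ξ j) ≤ 1 / ((i : ℕ) + 1 : ℝ)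

theorem countable_setOf_finite_inter_Iio {Z : Type*} [LinearOrder Z] (A : Set Z) :
    {x ∈ A | (A ∩ Iio x).Finite}.Countable := by
  refine countable_iff_exists_injOn.2 ⟨fun x => (A ∩ Iio x).ncard, ?_⟩
  -- `x ↦ #(A ∩ Iio x)` is strictly monotone on this set, since `x < y` puts `x` in `A ∩ Iio y`.
  have hmono : ∀ x ∈ {x ∈ A | (A ∩ Iio x).Finite}, ∀ y ∈ {x ∈ A | (A ∩ Iio x).Finite}, x < y →
      (A ∩ Iio x).ncard < (A ∩ Iio y).ncard := by
    rintro x ⟨hxA, -⟩ y ⟨-, hy⟩ hxy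
    refine ncard_lt_ncard ?_ hy
    refine ssubset_of_subset_not_subset
      (inter_subset_inter_right _ (Iio_subset_Iio hxy.le)) fun h => ?_
    exact lt_irrefl x (h ⟨hxA, hxy⟩).2
  intro x hx y hy hxy
  by_contra hne
  rcases lt_or_gt_of_ne hne with h | h
  · exact (hmono x hx y hy h).ne hxy
  · exact (hmono y hy x hx h).ne hxy.symm

namespace IsAdmissible

variable {Z : Type*} [LinearOrder Z] {A : Set Z}

theorem dist_le [PseudoMetricSpace Z] (hA : IsAdmissible A) {n : ℕ} {g : Fin n → Z}
    (hg : StrictMono g) (hgA : ∀ i, g i ∈ A) {x y : Z} (hgx : ∀ i, g i < x) (hx : x ∈ A)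
    (hy : y ∈ A) (hxy : x < y) : dist x y ≤ 1 / (n + 1 : ℝ) := by
  have hξ : StrictMono (Fin.snoc (Fin.snoc g x) y : Fin (n + 2) → Z) :=
    Fin.strictMono_snoc (Fin.strictMono_snoc hg hgx) <| Fin.lastCases
      (by simpa only [Fin.snoc_last] using hxy)
      fun i => by simpa only [Fin.snoc_castSucc] using (hgx i).trans hxy
  have hξA : ∀ i, (Fin.snoc (Fin.snoc g x) y : Fin (n + 2) → Z) i ∈ A :=
    Fin.lastCases (by simpa only [Fin.snoc_last] using hy) <|
      Fin.lastCases (by simpa only [Fin.snoc_castSucc, Fin.snoc_last] using hx)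
        fun i => by simpa only [Fin.snoc_castSucc] using hgA i
  simpa only [Fin.snoc_castSucc, Fin.snoc_last, Fin.val_castSucc, Fin.val_last] using
    hA _ _ hξ hξA (Fin.last n).castSucc (Fin.last (n + 1)) (Fin.castSucc_lt_last _)

-- Such an `x` is within `1 / (n + 1)` of every larger element of `A`, for every `n`.
theorem not_lt_of_infinite_inter_Iio [MetricSpace Z] (hA : IsAdmissible A) {x y : Z}
    (hx : x ∈ A) (hinf : (A ∩ Iio x).Infinite) (hy : y ∈ A) : ¬x < y := by
  intro hxy
  have hbound : ∀ n : ℕ, dist x y ≤ 1 / (n + 1 : ℝ) := by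
    intro n
    obtain ⟨s, hsA, rfl⟩ := hinf.exists_subset_card_eq n
    let g := s.orderEmbOfFin rfl
    have hgs : ∀ i, g i ∈ A ∩ Iio x := fun i => hsA (s.orderEmbOfFin_mem rfl i)
    exact hA.dist_le g.strictMono (fun i => (hgs i).1) (fun i => (hgs i).2) hx hy hxy
  have hzero : dist x y ≤ 0 := ge_of_tendsto' tendsto_one_div_add_atTop_nhds_zero_nat hbound
  exact hxy.ne (dist_le_zero.1 hzero)

theorem subsingleton_setOf_infinite_inter_Iio [MetricSpace Z] (hA : IsAdmissible A) :
    {x ∈ A | (A ∩ Iio x).Infinite}.Subsingleton := by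
  rintro x ⟨hx, hxinf⟩ y ⟨hy, hyinf⟩
  by_contra hne
  rcases lt_or_gt_of_ne hne with h | h
  · exact hA.not_lt_of_infinite_inter_Iio hx hxinf hy h
  · exact hA.not_lt_of_infinite_inter_Iio hy hyinf hx h

theorem countable [MetricSpace Z] (hA : IsAdmissible A) : A.Countable := by
  refine ((countable_setOf_finite_inter_Iio A).union
    hA.subsingleton_setOf_infinite_inter_Iio.countable).mono fun x hx => ?_
  exact (em (A ∩ Iio x).Finite).imp (⟨hx, ·⟩) (⟨hx, ·⟩)

end IsAdmissible

theorem stmt14_general (Z : Type) [MetricSpace Z] [LinearOrder Z]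
    (𝒜 : Set (Set Z))
    (h𝒜 : ∀ A : Set Z, A ∈ 𝒜 ↔ ∀ (n : ℕ) (ξ : Fin n → Z), StrictMono ξ →
      (∀ i, ξ i ∈ A) → ∀ i j : Fin n, i < j → dist (ξ i) (ξ j) ≤ 1 / ((i : ℕ) + 1 : ℝ)) :
    ∀ A ∈ 𝒜, A.Countable ∧
      ¬∃ (f : ℕ → Z) (a b : Z), (∀ n, f n ∈ A) ∧ StrictMono f ∧ a ∈ A ∧ b ∈ A ∧
        (∀ n, f n < a) ∧ a < b := by
  intro A hA𝒜
  have hA : IsAdmissible A := (h𝒜 A).1 hA𝒜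
  refine ⟨hA.countable, ?_⟩
  rintro ⟨f, a, b, hfA, hf, ha, hb, hfa, hab⟩
  have hinf : (A ∩ Iio a).Infinite :=
    (infinite_range_of_injective hf.injective).mono (range_subset_iff.2 fun n => ⟨hfA n, hfa n⟩)
  exact hA.not_lt_of_infinite_inter_Iio ha hinf hb hab

/-- Let `Z` be a metric space with a well-order, and `𝒜` the family of all `A ⊆ Z` whose
finite subsets `{ξ₁ < … < ξₙ}` satisfy `d(ξᵢ, ξⱼ) ≤ 1/i` for `i < j`. Then every member of
`𝒜` is countable; indeed its order type is at most `ω + 1` (there are no two elements `a < b`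
of `A` lying above a strictly increasing sequence in `A`). -/
theorem stmt14 (Z : Type) [MetricSpace Z] [LinearOrder Z] [WellFoundedLT Z]
    (𝒜 : Set (Set Z))
    (h𝒜 : ∀ A : Set Z, A ∈ 𝒜 ↔ ∀ (n : ℕ) (ξ : Fin n → Z), StrictMono ξ →
      (∀ i, ξ i ∈ A) → ∀ i j : Fin n, i < j → dist (ξ i) (ξ j) ≤ 1 / ((i : ℕ) + 1 : ℝ)) :
    ∀ A ∈ 𝒜, A.Countable ∧
      ¬∃ (f : ℕ → Z) (a b : Z), (∀ n, f n ∈ A) ∧ StrictMono f ∧ a ∈ A ∧ b ∈ A ∧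
        (∀ n, f n < a) ∧ a < b :=
  stmt14_general Z 𝒜 h𝒜
end

section
/- Let Z be a metric space with a well-order, 𝒜 the adequate family of all A ⊆ Z whose finite subsets {ξ_1 < ... < ξ_n} satisfy d(ξ_i, ξ_j) ≤ 1/i for i < j. If Z_0 ⊆ Z is a non-discrete subset (has an accumulation point z ∈ Z_0's closure within Z), then Z_0 contains an infinite member of 𝒜. -/
/-!
Take a sequence in `Z₀ \ {z}` converging to `z`. Its fibres are finite, so by Ramsey's theorem
and the absence of infinite descending chains it has a strictly increasing subsequence, and a
further subsequence gives `dist (ξ n) z < 1 / (2 (n + 1))`. By the triangle inequality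
`dist (ξ a) (ξ b) ≤ 1 / (a + 1)` for `a < b`, and a finite increasing family `η` in the range of `ξ`
has `η i = ξ (k i)` with `i ≤ k i`, so the range of `ξ` lies in `𝒜`.
-/

open Filter Topology Set

theorem exists_strictMono_subseq_of_tendsto_cofinite {α : Type*} [LinearOrder α]
    [WellFoundedLT α] {x : ℕ → α} (hx : Tendsto x atTop cofinite) :
    ∃ g : ℕ → ℕ, StrictMono g ∧ StrictMono (x ∘ g) := by
  obtain ⟨g, hinc | hnoninc⟩ := exists_increasing_or_nonincreasing_subseq (· < ·) x
  · exact ⟨g, g.strictMono, hinc⟩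
  · exfalso
    -- a nonincreasing sequence is constant from the index of its minimum on
    obtain ⟨_, ⟨k, rfl⟩, hmin⟩ := wellFounded_lt.has_min (range (x ∘ g)) (range_nonempty _)
    have hconst : ∀ n > k, x (g n) = x (g k) := fun n hn =>
      le_antisymm (not_lt.1 (hnoninc k n hn)) (not_lt.1 (hmin _ (mem_range_self n)))
    have hne : ∀ᶠ n in atTop, x (g n) ≠ x (g k) :=
      (hx.comp g.strictMono.tendsto_atTop).eventually (eventually_cofinite_ne _)
    obtain ⟨n, hn, hnk⟩ := (hne.and (eventually_gt_atTop k)).exists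
    exact hn (hconst n hnk)

theorem AccPt.exists_strictMono_seq_dist_lt {Z : Type*} [MetricSpace Z] [LinearOrder Z]
    [WellFoundedLT Z] {s : Set Z} {z : Z} (hz : AccPt z (𝓟 s)) {ε : ℕ → ℝ}
    (hε : ∀ n, 0 < ε n) :
    ∃ ξ : ℕ → Z, StrictMono ξ ∧ (∀ n, ξ n ∈ s) ∧ ∀ n, dist (ξ n) z < ε n := by
  have := accPt_principal_iff_nhdsWithin.1 hz
  obtain ⟨x, hx⟩ := exists_seq_tendsto (𝓝[s \ {z}] z)
  have hcofinite : Tendsto x atTop cofinite :=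
    hx.mono_right ((nhdsWithin_mono z fun _ h => h.2).trans (nhdsNE_le_cofinite z))
  obtain ⟨g, hg, hxg⟩ := exists_strictMono_subseq_of_tendsto_cofinite hcofinite
  have hnear : ∀ n, {y | y ∈ s ∧ dist y z < ε n} ∈ 𝓝[s \ {z}] z := fun n =>
    mem_of_superset (inter_mem_nhdsWithin _ (Metric.ball_mem_nhds z (hε n)))
      fun _ hy => ⟨hy.1.1, hy.2⟩
  obtain ⟨φ, hφ, hφnear⟩ := extraction_forall_of_eventually fun n =>
    (hx.comp hg.tendsto_atTop).eventually (hnear n)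
  exact ⟨x ∘ g ∘ φ, hxg.comp hφ, fun n => (hφnear n).1, fun n => (hφnear n).2⟩

theorem Fin.val_le_of_strictMono {n : ℕ} {k : Fin n → ℕ} (hk : StrictMono k) (i : Fin n) :
    (i : ℕ) ≤ k i := by
  obtain ⟨m, hm⟩ := i
  induction m with
  | zero => exact Nat.zero_le _
  | succ m ih => exact (ih (by omega)).trans_lt (hk (Fin.mk_lt_mk.2 m.lt_succ_self))

section Antitone

variable {Z : Type*} [PseudoMetricSpace Z] {ξ : ℕ → Z} {r : ℕ → ℝ}

theorem Antitone.dist_le_of_dist_lt_half (hr : Antitone r) {z : Z}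
    (h : ∀ n, dist (ξ n) z < r n / 2) {a b : ℕ} (hab : a ≤ b) : dist (ξ a) (ξ b) ≤ r a :=
  calc dist (ξ a) (ξ b) ≤ dist (ξ a) z + dist (ξ b) z := dist_triangle_right _ _ _
    _ ≤ r a / 2 + r a / 2 := by
        gcongr
        · exact (h a).le
        · exact (h b).le.trans (by gcongr; exact hr hab)
    _ = r a := add_halves _

theorem Antitone.dist_le_of_mem_range [LinearOrder Z] (hr : Antitone r) (hξ : StrictMono ξ)
    (hd : ∀ a b, a < b → dist (ξ a) (ξ b) ≤ r a) {n : ℕ} {η : Fin n → Z} (hη : StrictMono η)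
    (hηξ : ∀ i, η i ∈ range ξ) {i j : Fin n} (hij : i < j) : dist (η i) (η j) ≤ r i := by
  choose k hk using hηξ
  have hkmono : StrictMono k := fun a b hab => hξ.lt_iff_lt.1 (by simpa only [hk] using hη hab)
  rw [← hk i, ← hk j]
  exact (hd _ _ (hkmono hij)).trans (hr (Fin.val_le_of_strictMono hkmono i))

end Antitone

/-- Let `Z` be a metric space with a well-order, and `𝒜` the family of all `A ⊆ Z` whose
finite subsets `{ξ₁ < … < ξₙ}` satisfy `d(ξᵢ, ξⱼ) ≤ 1/i` for `i < j`. If `Z₀ ⊆ Z` has an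
accumulation point `z`, then `Z₀` contains an infinite member of `𝒜`. -/
theorem stmt15 (Z : Type) [MetricSpace Z] [LinearOrder Z] [WellFoundedLT Z]
    (𝒜 : Set (Set Z))
    (h𝒜 : ∀ A : Set Z, A ∈ 𝒜 ↔ ∀ (n : ℕ) (ξ : Fin n → Z), StrictMono ξ →
      (∀ i, ξ i ∈ A) → ∀ i j : Fin n, i < j → dist (ξ i) (ξ j) ≤ 1 / ((i : ℕ) + 1 : ℝ))
    (Z₀ : Set Z) (z : Z) (hz : AccPt z (Filter.principal Z₀)) :
    ∃ A : Set Z, A ⊆ Z₀ ∧ A ∈ 𝒜 ∧ A.Infinite := by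
  have hr : Antitone fun n : ℕ => 1 / ((n : ℝ) + 1) := fun a b hab => by dsimp only; gcongr
  obtain ⟨ξ, hξ, hξZ₀, hξz⟩ :=
    hz.exists_strictMono_seq_dist_lt (ε := fun n => 1 / ((n : ℝ) + 1) / 2) fun n => by positivity
  refine ⟨range ξ, range_subset_iff.2 hξZ₀, (h𝒜 _).2 fun n η hη hηξ i j hij => ?_,
    infinite_range_of_injective hξ.injective⟩
  exact hr.dist_le_of_mem_range hξ (fun a b hab => hr.dist_le_of_dist_lt_half hξz hab.le)
    hη hηξ hij
end

section
/- Consider T = κ^κ (the product of κ copies of the discrete space κ) and the family 𝒜 of all subsets A ⊆ T such that there exists λ < κ with: for all distinct x, y ∈ A, x and y agree on all coordinates below λ and x_λ ≠ y_λ. Then for any decomposition T = ⋃_{i<κ} T_i such that every member of 𝒜 has only finitely many elements in each T_i, there is a contradiction; i.e., no such decomposition exists. -/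
/-!
Diagonalize: build `t : κ → κ` by well-founded recursion so that `t i` avoids the `i`-th
coordinates of the members of `T i` that agree with `t` below `i`. That set of coordinates is
finite, since one member of `T i` per value forms a family that splits at `i`; as `κ` is
infinite, `t i` can be chosen outside it. Then `t` lies in no `T i`.
-/

open Set

variable {ι α : Type*}

def SplitsAt [LT ι] (A : Set (ι → α)) (l : ι) : Prop :=
  ∀ x ∈ A, ∀ y ∈ A, x ≠ y → (∀ j < l, x j = y j) ∧ x l ≠ y l

theorem exists_forall_apply_notMem_of_finite [LT ι] [WellFoundedLT ι] [Infinite α]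
    (F : (i : ι) → ((j : ι) → j < i → α) → Set α) (hF : ∀ i g, (F i g).Finite) :
    ∃ t : ι → α, ∀ i, t i ∉ F i fun j _ ↦ t j := by
  let t : ι → α := wellFounded_lt.fix fun i g ↦ (hF i g).infinite_compl.nonempty.some
  refine ⟨t, fun i ↦ ?_⟩
  have ht : t i = (hF i fun j _ ↦ t j).infinite_compl.nonempty.some := wellFounded_lt.fix_eq _ i
  exact ht ▸ (hF i _).infinite_compl.nonempty.some_mem

theorem SplitsAt.of_injOn_eval [LT ι] {A : Set (ι → α)} {l : ι} {g : (j : ι) → j < l → α}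
    (hA : ∀ x ∈ A, ∀ j (hj : j < l), x j = g j hj) (hinj : A.InjOn (· l)) : SplitsAt A l :=
  fun x hx y hy hxy ↦
    ⟨fun j hj ↦ (hA x hx j hj).trans (hA y hy j hj).symm, fun h ↦ hxy (hinj hx hy h)⟩

theorem finite_image_eval_of_forall_splitsAt [LT ι] {S : Set (ι → α)}
    (hS : ∀ A, (∃ l, SplitsAt A l) → (A ∩ S).Finite) (i : ι) (g : (j : ι) → j < i → α) :
    ((· i) '' {x ∈ S | ∀ j (hj : j < i), x j = g j hj}).Finite := by
  obtain ⟨A, hAsub, hinj, hAimg⟩ := (surjOn_image (fun x : ι → α ↦ x i)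
    {x ∈ S | ∀ j (hj : j < i), x j = g j hj}).exists_subset_injOn_image_eq
  have hsplit : SplitsAt A i := .of_injOn_eval (fun x hx ↦ (hAsub hx).2) hinj
  have hA : A.Finite := by
    simpa [inter_eq_left.2 fun x hx ↦ (hAsub hx).1] using hS A ⟨i, hsplit⟩
  exact hAimg ▸ hA.image _

/-- Let `ι` be an infinite well-ordered index set (representing the cardinal `κ`),
`T = κ^κ = ι → ι`, and `𝒜` the adequate family of all `A ⊆ T` such that for some `λ = l`,
distinct members of `A` agree on all coordinates below `l` and differ at coordinate `l`.
Then there is no decomposition `T = ⋃_{i} T_i` such that every member of `𝒜` has only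
finitely many elements in each `T_i`. -/
theorem stmt17 (ι : Type) [LinearOrder ι] [WellFoundedLT ι] [Infinite ι] :
    ¬∃ T : ι → Set (ι → ι),
      (⋃ i, T i) = Set.univ ∧
      ∀ A : Set (ι → ι),
        (∃ l : ι, ∀ x ∈ A, ∀ y ∈ A, x ≠ y → (∀ j < l, x j = y j) ∧ x l ≠ y l) →
        ∀ i, (A ∩ T i).Finite := by
  rintro ⟨T, hcov, hfin⟩
  obtain ⟨t, ht⟩ := exists_forall_apply_notMem_of_finite
    (fun i g ↦ (· i) '' {x ∈ T i | ∀ j (hj : j < i), x j = g j hj})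
    fun i ↦ finite_image_eval_of_forall_splitsAt (fun A hA ↦ hfin A hA i) i
  obtain ⟨i, hti⟩ := mem_iUnion.1 (hcov ▸ mem_univ t)
  exact ht i ⟨t, ⟨hti, fun _ _ ↦ rfl⟩, rfl⟩
end
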